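/- arXiv:2007.09081 — 2 statements merged into one kernel-verified Lean document; each statement's English description precedes it below -/
import Mathlib

section
/- For a strongly convex C² function F : ℝᵖ → ℝ, the minimizer of W ↦ α‖W − W̄‖² + F(W) converges to the (unique) minimizer of F as α → 0⁺, provided F has a minimizer. -/
/-! Evaluating the strong convexity inequality of `F` at the midpoint of `W_F` and `W` gives the
quadratic growth `F W_F + μ/4 ‖W - W_F‖² ≤ F W`. Comparing the penalized objective at `W_α` and at
`W_F` then yields `μ/4 ‖W_α - W_F‖² ≤ α ‖W_F - W̄‖²`, so `W_α → W_F` at rate `O(√α)`. -/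

open Filter Topology Set

lemma StrongConvexOn.add_sq_norm_sub_le_of_isMinOn {E : Type*} [NormedAddCommGroup E]
    [NormedSpace ℝ E] {s : Set E} {m : ℝ} {f : E → ℝ} {a b : E} (hf : StrongConvexOn s m f)
    (hmin : IsMinOn f s a) (ha : a ∈ s) (hb : b ∈ s) :
    f a + m / 4 * ‖b - a‖ ^ 2 ≤ f b := by
  have half : (0 : ℝ) ≤ 1 / 2 := by norm_num
  have hmid := hf.2 ha hb half half (by norm_num)
  have hle : f a ≤ f ((1 / 2 : ℝ) • a + (1 / 2 : ℝ) • b) :=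
    hmin (hf.1 ha hb half half (by norm_num))
  rw [norm_sub_rev] at hmid
  simp only [smul_eq_mul] at hmid
  linarith

lemma sq_norm_sub_le_of_isMinOn_penalized {E : Type*} [SeminormedAddCommGroup E] {f : E → ℝ}
    {a c w : E} {k α : ℝ} (hα : 0 ≤ α)
    (hgrowth : ∀ x, f a + k * ‖x - a‖ ^ 2 ≤ f x)
    (hw : IsMinOn (fun x => α * ‖x - c‖ ^ 2 + f x) univ w) :
    k * ‖w - a‖ ^ 2 ≤ α * ‖a - c‖ ^ 2 := by
  have hcmp : α * ‖w - c‖ ^ 2 + f w ≤ α * ‖a - c‖ ^ 2 + f a := hw (mem_univ a)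
  have hpen : 0 ≤ α * ‖w - c‖ ^ 2 := by positivity
  linarith [hgrowth w]

lemma tendsto_nhdsGT_zero_of_sq_norm_sub_le {E : Type*} [SeminormedAddCommGroup E]
    {x : ℝ → E} {a : E} {k K : ℝ} (hk : 0 < k)
    (hx : ∀ α, 0 < α → k * ‖x α - a‖ ^ 2 ≤ α * K) :
    Tendsto x (𝓝[>] 0) (𝓝 a) := by
  have hsq : Tendsto (fun α => ‖x α - a‖ ^ 2) (𝓝[>] 0) (𝓝 0) := by
    have hlin : Tendsto (fun α : ℝ => α * K / k) (𝓝[>] 0) (𝓝 0) := by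
      simpa using ((continuous_id.mul continuous_const).div_const k).tendsto' 0 _ (by simp)
        |>.mono_left nhdsWithin_le_nhds
    refine squeeze_zero' (Eventually.of_forall fun _ => by positivity) ?_ hlin
    filter_upwards [self_mem_nhdsWithin] with α hα
    rw [le_div_iff₀ hk, mul_comm]
    exact hx α hα
  rw [tendsto_iff_norm_sub_tendsto_zero]
  simpa only [Real.sqrt_sq (norm_nonneg _), Real.sqrt_zero] using hsq.sqrt

theorem stmt_11_general {p : ℕ} (μ : ℝ) (hμ : 0 < μ)
    (F : EuclideanSpace ℝ (Fin p) → ℝ)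
    (hsc : StrongConvexOn Set.univ μ F)
    (Wbar WF : EuclideanSpace ℝ (Fin p))
    (hWF : IsMinOn F Set.univ WF)
    (Wα : ℝ → EuclideanSpace ℝ (Fin p))
    (hWα : ∀ α : ℝ, 0 < α →
      IsMinOn (fun W => α * ‖W - Wbar‖ ^ 2 + F W) Set.univ (Wα α)) :
    Filter.Tendsto Wα (nhdsWithin 0 (Set.Ioi 0)) (nhds WF) := by
  have hgrowth : ∀ W, F WF + μ / 4 * ‖W - WF‖ ^ 2 ≤ F W := fun W =>
    hsc.add_sq_norm_sub_le_of_isMinOn hWF (mem_univ WF) (mem_univ W)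
  exact tendsto_nhdsGT_zero_of_sq_norm_sub_le (by positivity) fun α hα =>
    sq_norm_sub_le_of_isMinOn_penalized hα.le hgrowth (hWα α hα)

/-- For a strongly convex `C²` function `F` with minimizer `W_F`, the minimizer `W_α` of
`W ↦ α‖W − W̄‖² + F(W)` converges to `W_F` as `α → 0⁺`. -/
theorem stmt_11 {p : ℕ} (μ : ℝ) (hμ : 0 < μ)
    (F : EuclideanSpace ℝ (Fin p) → ℝ)
    (hF : ContDiff ℝ 2 F) (hsc : StrongConvexOn Set.univ μ F)
    (Wbar WF : EuclideanSpace ℝ (Fin p))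
    (hWF : IsMinOn F Set.univ WF)
    (Wα : ℝ → EuclideanSpace ℝ (Fin p))
    (hWα : ∀ α : ℝ, 0 < α →
      IsMinOn (fun W => α * ‖W - Wbar‖ ^ 2 + F W) Set.univ (Wα α)) :
    Filter.Tendsto Wα (nhdsWithin 0 (Set.Ioi 0)) (nhds WF) :=
  stmt_11_general μ hμ F hsc Wbar WF hWF Wα hWα
end

section
/- If F is μ-strongly convex with minimizer W_F and W_α minimizes W ↦ α‖W − W̄‖² + F(W), then ‖W_α − W_F‖ ≤ (2α/μ)‖W̄ − W_F‖. -/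
/-!
Adding the convex penalty `α‖W - W̄‖²` keeps the objective `μ`-strongly convex, so both `F` and
the penalized objective grow at least like `μ/2 ‖W - W_min‖²` away from their minimizers.
Adding the two growth inequalities at `W_α` and `W_F` cancels `F` and leaves
`μ‖W_α - W_F‖² ≤ α(‖W_F - W̄‖² - ‖W_α - W̄‖²) ≤ 2α‖W̄ - W_F‖‖W_α - W_F‖`.
-/

open Set Filter Topology

section NormedSpace

variable {E : Type*} [NormedAddCommGroup E] [NormedSpace ℝ E] {s : Set E} {f g : E → ℝ} {m : ℝ}

lemma ConvexOn.add_strongConvexOn (hg : ConvexOn ℝ s g) (hf : StrongConvexOn s m f) :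
    StrongConvexOn s m (g + f) := by
  simpa [StrongConvexOn] using (uniformConvexOn_zero.2 hg).add hf

lemma convexOn_univ_mul_sq_norm_sub {α : ℝ} (hα : 0 ≤ α) (c : E) :
    ConvexOn ℝ univ fun x => α * ‖x - c‖ ^ 2 := by
  simpa [dist_eq_norm] using ((convexOn_univ_dist c).pow (fun _ _ => dist_nonneg) 2).smul hα

lemma StrongConvexOn.mul_sq_norm_sub_le_of_isMinOn {x₀ x : E} (hf : StrongConvexOn s m f)
    (hmin : IsMinOn f s x₀) (hx₀ : x₀ ∈ s) (hx : x ∈ s) :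
    m / 2 * ‖x - x₀‖ ^ 2 ≤ f x - f x₀ := by
  have key : ∀ t ∈ Ioo (0 : ℝ) 1, (1 - t) * (m / 2 * ‖x - x₀‖ ^ 2) ≤ f x - f x₀ := by
    rintro t ⟨ht₀, ht₁⟩
    have hconv := hf.2 hx hx₀ ht₀.le (sub_nonneg.2 ht₁.le) (add_sub_cancel t 1)
    have hle : f x₀ ≤ f (t • x + (1 - t) • x₀) :=
      hmin (hf.1 hx hx₀ ht₀.le (sub_nonneg.2 ht₁.le) (add_sub_cancel t 1))
    simp only [smul_eq_mul] at hconv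
    nlinarith
  have hlim : Tendsto (fun t : ℝ => (1 - t) * (m / 2 * ‖x - x₀‖ ^ 2)) (𝓝[>] 0)
      (𝓝 (m / 2 * ‖x - x₀‖ ^ 2)) := by
    have : Tendsto (fun t : ℝ => (1 - t) * (m / 2 * ‖x - x₀‖ ^ 2)) (𝓝 0)
        (𝓝 ((1 - 0) * (m / 2 * ‖x - x₀‖ ^ 2))) := by
      apply Continuous.tendsto; fun_prop
    simpa using this.mono_left nhdsWithin_le_nhds
  exact le_of_tendsto hlim (eventually_of_mem (Ioo_mem_nhdsGT one_pos) key)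

end NormedSpace

variable {E : Type*} [NormedAddCommGroup E] [InnerProductSpace ℝ E]

lemma sq_norm_sub_sub_sq_norm_sub_le (a b c : E) :
    ‖a - c‖ ^ 2 - ‖b - c‖ ^ 2 ≤ 2 * ‖c - a‖ * ‖b - a‖ := by
  have hexp : b - c = (b - a) - (c - a) := by abel
  rw [hexp, norm_sub_sq_real (b - a), norm_sub_rev a c]
  nlinarith [real_inner_le_norm (b - a) (c - a), norm_nonneg (b - a)]

theorem StrongConvexOn.norm_sub_le_of_isMinOn_mul_sq_norm_sub_add {F : E → ℝ} {μ α : ℝ}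
    {c x₀ xα : E} (hF : StrongConvexOn univ μ F) (hμ : 0 < μ) (hα : 0 ≤ α)
    (hx₀ : IsMinOn F univ x₀) (hxα : IsMinOn (fun x => α * ‖x - c‖ ^ 2 + F x) univ xα) :
    ‖xα - x₀‖ ≤ 2 * α / μ * ‖c - x₀‖ := by
  have hG := (convexOn_univ_mul_sq_norm_sub hα c).add_strongConvexOn hF
  have hF_growth := hF.mul_sq_norm_sub_le_of_isMinOn hx₀ (mem_univ _) (mem_univ xα)
  have hG_growth := hG.mul_sq_norm_sub_le_of_isMinOn hxα (mem_univ _) (mem_univ x₀)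
  have hcross := mul_le_mul_of_nonneg_left (sq_norm_sub_sub_sq_norm_sub_le x₀ xα c) hα
  simp only [Pi.add_apply] at hG_growth
  rw [norm_sub_rev x₀] at hG_growth
  have hd : μ * ‖xα - x₀‖ ^ 2 ≤ 2 * α * ‖c - x₀‖ * ‖xα - x₀‖ := by nlinarith
  rcases (norm_nonneg (xα - x₀)).eq_or_lt with hzero | hpos
  · rw [← hzero]; positivity
  · rw [div_mul_eq_mul_div, le_div_iff₀ hμ]
    nlinarith

theorem stmt_12_general {p : ℕ} (μ α : ℝ) (hμ : 0 < μ) (hα : 0 < α)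
    (F : EuclideanSpace ℝ (Fin p) → ℝ)
    (hsc : StrongConvexOn Set.univ μ F)
    (Wbar WF Wα : EuclideanSpace ℝ (Fin p))
    (hWF : IsMinOn F Set.univ WF)
    (hWα : IsMinOn (fun W => α * ‖W - Wbar‖ ^ 2 + F W) Set.univ Wα) :
    ‖Wα - WF‖ ≤ (2 * α / μ) * ‖Wbar - WF‖ :=
  hsc.norm_sub_le_of_isMinOn_mul_sq_norm_sub_add hμ hα.le hWF hWα

/-- If `F` is `μ`-strongly convex with minimizer `W_F` and `W_α` minimizes
`W ↦ α‖W − W̄‖² + F(W)`, then `‖W_α − W_F‖ ≤ (2α/μ)‖W̄ − W_F‖`. -/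
theorem stmt_12 {p : ℕ} (μ α : ℝ) (hμ : 0 < μ) (hα : 0 < α)
    (F : EuclideanSpace ℝ (Fin p) → ℝ)
    (hFdiff : Differentiable ℝ F) (hsc : StrongConvexOn Set.univ μ F)
    (Wbar WF Wα : EuclideanSpace ℝ (Fin p))
    (hWF : IsMinOn F Set.univ WF)
    (hWα : IsMinOn (fun W => α * ‖W - Wbar‖ ^ 2 + F W) Set.univ Wα) :
    ‖Wα - WF‖ ≤ (2 * α / μ) * ‖Wbar - WF‖ :=
  stmt_12_general μ α hμ hα F hsc Wbar WF Wα hWF hWα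
end
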